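/- arXiv:1411.4813 — 3 statements merged into one kernel-verified Lean document; each statement's English description precedes it below -/
import Mathlib

section
/- For every arity n ≥ 1, no function F : (Fin n → ZMod (2^32)) → ZMod (2^32) that lies in the clone generated by 32-bit multiplication and three-input addition is a constant function. That is, there is no formula built from multiplication x*y and three-input addition x+y+z that yields a known constant from unknown inputs. -/
/-! Every operation in the clone vanishes at the zero vector, while modulo 2 it takes the value 1
at the all-ones vector, because `1 * 1` and `1 + 1 + 1` are both odd. Hence it is not constant. -/

/-- The clone of operations on `ZMod (2^32)` of arity `n` generated by
multiplication `x*y` and three-input addition `x+y+z`: the smallest set of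
functions containing all coordinate projections and closed under the
corresponding pointwise operations. -/
inductive MulAdd3Clone (n : ℕ) : ((Fin n → ZMod (2^32)) → ZMod (2^32)) → Prop
  | proj (i : Fin n) : MulAdd3Clone n fun x => x i
  | mul {F G} : MulAdd3Clone n F → MulAdd3Clone n G →
      MulAdd3Clone n fun x => F x * G x
  | add3 {F G H} : MulAdd3Clone n F → MulAdd3Clone n G → MulAdd3Clone n H →
      MulAdd3Clone n fun x => F x + G x + H x

namespace MulAdd3Clone

variable {n : ℕ} {F : (Fin n → ZMod (2^32)) → ZMod (2^32)}

lemma apply_zero (hF : MulAdd3Clone n F) : F 0 = 0 := by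
  induction hF with
  | proj i => rfl
  | mul _ _ ihF ihG => simp only [ihF, ihG, mul_zero]
  | add3 _ _ _ ihF ihG ihH => simp only [ihF, ihG, ihH, add_zero]

lemma castHom_apply_one (hF : MulAdd3Clone n F) :
    ZMod.castHom (dvd_pow_self 2 (by norm_num)) (ZMod 2) (F 1) = 1 := by
  induction hF with
  | proj i => exact map_one _
  | mul _ _ ihF ihG => simp only [map_mul, ihF, ihG, mul_one]
  | add3 _ _ _ ihF ihG ihH => simp only [map_add, ihF, ihG, ihH]; decide

end MulAdd3Clone

theorem stmt0_general (n : ℕ) (F : (Fin n → ZMod (2^32)) → ZMod (2^32))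
    (hF : MulAdd3Clone n F) : ¬ ∃ c : ZMod (2^32), ∀ x, F x = c := by
  rintro ⟨c, hc⟩
  have hodd := hF.castHom_apply_one
  rw [hc, ← hc 0, hF.apply_zero, map_zero] at hodd
  exact zero_ne_one hodd

/-- No formula built from 32-bit multiplication and three-input addition
yields a known constant from unknown inputs. -/
theorem stmt0 (n : ℕ) (hn : 1 ≤ n) (F : (Fin n → ZMod (2^32)) → ZMod (2^32))
    (hF : MulAdd3Clone n F) : ¬ ∃ c : ZMod (2^32), ∀ x, F x = c :=
  stmt0_general n F hF
end

section
/- Let f : ZMod (2^32) → ZMod (2^32) → ZMod (2^32) be a binary operation for which there exist odd elements x₁ and y₁ of ZMod (2^32) such that f x₁ y₁ is even. Then there exists a constant function in the unary (arity 1) clone generated by multiplication, three-input addition, and f. -/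
/-!
Let `t = x ^ (2 ^ 31)`, which is `1` for odd `x` and `0` for even `x`. The unary operation
`x ↦ (f (x₁ * t) (y₁ * t) * x) ^ 32` is in the clone: powers come from repeated
multiplication, and multiplication by an odd constant from iterating `G ↦ G + F + F`,
which adds `2 * F`. For even `x` the factor `x ^ 32` vanishes; for odd `x` the value is
`f x₁ y₁ ^ 32`, which vanishes because `f x₁ y₁` is even.
-/

/-- The clone of operations of arity `n` on `ZMod (2^32)` generated by
multiplication, three-input addition, and a binary operation `f`. -/
inductive CloneF (f : ZMod (2^32) → ZMod (2^32) → ZMod (2^32)) (n : ℕ) :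
    ((Fin n → ZMod (2^32)) → ZMod (2^32)) → Prop
  | proj (i : Fin n) : CloneF f n fun x => x i
  | mul {F G} : CloneF f n F → CloneF f n G → CloneF f n fun x => F x * G x
  | add3 {F G H} : CloneF f n F → CloneF f n G → CloneF f n H →
      CloneF f n fun x => F x + G x + H x
  | app {F G} : CloneF f n F → CloneF f n G → CloneF f n fun x => f (F x) (G x)

namespace ZMod

theorem pow_eq_zero_of_even_val {k : ℕ} [NeZero (2 ^ k)] {a : ZMod (2 ^ k)}
    (ha : Even a.val) : a ^ k = 0 := by
  obtain ⟨m, hm⟩ := ha.two_dvd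
  have h2k : (2 : ZMod (2 ^ k)) ^ k = 0 := by exact_mod_cast natCast_self (2 ^ k)
  rw [← natCast_zmod_val a, hm, Nat.cast_mul, mul_pow, Nat.cast_ofNat, h2k, zero_mul]

theorem pow_eq_one_of_odd_val {k : ℕ} {a : ZMod (2 ^ (k + 1))} (ha : Odd a.val) :
    a ^ 2 ^ k = 1 := by
  have hunit : IsUnit a := by
    rw [← natCast_zmod_val a, isUnit_iff_coprime]
    exact ha.coprime_two_right.pow_right _
  have htot : Nat.totient (2 ^ (k + 1)) = 2 ^ k := by
    simp [Nat.totient_prime_pow_succ Nat.prime_two]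
  rw [← hunit.unit_spec, ← Units.val_pow_eq_pow_val, ← htot, pow_totient, Units.val_one]

end ZMod

namespace CloneF

variable {f : ZMod (2^32) → ZMod (2^32) → ZMod (2^32)} {n : ℕ}
  {F : (Fin n → ZMod (2^32)) → ZMod (2^32)}

theorem pow (hF : CloneF f n F) {m : ℕ} (hm : m ≠ 0) : CloneF f n fun x => F x ^ m := by
  obtain ⟨m, rfl⟩ := Nat.exists_eq_add_one_of_ne_zero hm
  clear hm
  induction m with
  | zero => simpa using hF
  | succ m ih => simpa only [pow_succ] using ih.mul hF

theorem const_mul_of_odd_val (hF : CloneF f n F) {c : ZMod (2^32)} (hc : Odd c.val) :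
    CloneF f n fun x => c * F x := by
  obtain ⟨k, hk⟩ := hc
  rw [← ZMod.natCast_zmod_val c, hk]
  clear hk
  induction k with
  | zero => simpa using hF
  | succ k ih =>
    convert ih.add3 hF hF using 2 with x
    push_cast
    ring

end CloneF

/-- If `f` maps some pair of odd inputs to an even output, then a constant
function exists in the unary clone generated by multiplication, three-input
addition and `f`. -/
theorem stmt6 (f : ZMod (2^32) → ZMod (2^32) → ZMod (2^32))
    (x₁ y₁ : ZMod (2^32)) (hx₁ : Odd x₁.val) (hy₁ : Odd y₁.val)
    (hf : ¬ Odd (f x₁ y₁).val) :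
    ∃ F : (Fin 1 → ZMod (2^32)) → ZMod (2^32),
      CloneF f 1 F ∧ ∃ c : ZMod (2^32), ∀ x, F x = c := by
  have ht : CloneF f 1 fun x => x 0 ^ 2 ^ 31 := (CloneF.proj 0).pow (by norm_num)
  refine ⟨fun x => (f (x₁ * x 0 ^ 2 ^ 31) (y₁ * x 0 ^ 2 ^ 31) * x 0) ^ 32,
    (((ht.const_mul_of_odd_val hx₁).app (ht.const_mul_of_odd_val hy₁)).mul
      (CloneF.proj 0)).pow (by norm_num), 0, fun x => ?_⟩
  dsimp only
  rw [mul_pow]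
  rcases Nat.even_or_odd (x 0).val with hx | hx
  · rw [ZMod.pow_eq_zero_of_even_val hx, mul_zero]
  · rw [ZMod.pow_eq_one_of_odd_val hx, mul_one, mul_one,
      ZMod.pow_eq_zero_of_even_val (Nat.not_odd_iff_even.mp hf), zero_mul]
end

section
/- Define 32-bit division div : ZMod (2^32) → ZMod (2^32) → ZMod (2^32) by div x y = the image in ZMod (2^32) of the natural-number quotient (ZMod.val x) / (ZMod.val y) (so that div 0 0 = 0 and div x x = 1 for x ≠ 0). Then div is not safe in conjunction with multiplication and three-input addition: there exist odd inputs with even output (for instance div 1 3 = 0), and consequently there exists a constant function in the unary clone generated by multiplication, three-input addition, and div. -/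
/-- 32-bit division: the image in `ZMod (2^32)` of the natural-number quotient
of the representatives. -/
def div32 (x y : ZMod (2^32)) : ZMod (2^32) := ((x.val / y.val : ℕ) : ZMod (2^32))

/-! The constant is `x ↦ div32 e (e + e + e)` where `e = div32 x x` is `0` or `1`,
and both `0 / 0` and `1 / 3` truncate to `0`. -/

lemma div32_zero_left (y : ZMod (2^32)) : div32 0 y = 0 := by
  simp [div32]

lemma div32_self {x : ZMod (2^32)} (hx : x ≠ 0) : div32 x x = 1 := by
  have hpos : 0 < x.val := Nat.pos_of_ne_zero ((ZMod.val_ne_zero x).mpr hx)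
  simp [div32, Nat.div_self hpos]

lemma div32_eq_zero_of_val_lt {x y : ZMod (2^32)} (h : x.val < y.val) : div32 x y = 0 := by
  simp [div32, Nat.div_eq_of_lt h]

lemma div32_one_three : div32 1 3 = 0 :=
  div32_eq_zero_of_val_lt (by decide)

lemma div32_self_div_three_times_self (x : ZMod (2^32)) :
    div32 (div32 x x) (div32 x x + div32 x x + div32 x x) = 0 := by
  by_cases hx : x = 0
  · rw [hx, div32_zero_left, div32_zero_left]
  · rw [div32_self hx, show (1 : ZMod (2^32)) + 1 + 1 = 3 by decide, div32_one_three]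

lemma cloneF_div32_self_div_three_times_self :
    CloneF div32 1 fun x => div32 (div32 (x 0) (x 0))
      (div32 (x 0) (x 0) + div32 (x 0) (x 0) + div32 (x 0) (x 0)) :=
  have hself : CloneF div32 1 fun x => div32 (x 0) (x 0) := .app (.proj 0) (.proj 0)
  .app hself (.add3 hself hself hself)

/-- 32-bit division (with `div32 0 0 = 0` and `div32 x x = 1` for `x ≠ 0`) is
not safe: there are odd inputs with even output (e.g. `div32 1 3 = 0`), and
consequently a constant function exists in the unary clone generated by
multiplication, three-input addition and `div32`. -/
theorem stmt10 :
    (div32 0 0 = 0 ∧ ∀ x : ZMod (2^32), x ≠ 0 → div32 x x = 1) ∧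
    (div32 1 3 = 0 ∧
      Odd (ZMod.val (1 : ZMod (2^32))) ∧ Odd (ZMod.val (3 : ZMod (2^32))) ∧
      ∃ x y : ZMod (2^32), Odd x.val ∧ Odd y.val ∧ ¬ Odd (div32 x y).val) ∧
    ∃ F : (Fin 1 → ZMod (2^32)) → ZMod (2^32),
      CloneF div32 1 F ∧ ∃ c : ZMod (2^32), ∀ x, F x = c := by
  have hodd1 : Odd (ZMod.val (1 : ZMod (2^32))) := by decide
  have hodd3 : Odd (ZMod.val (3 : ZMod (2^32))) := by decide
  have heven : ¬ Odd (div32 1 3).val := by simp [div32_one_three]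
  exact ⟨⟨div32_zero_left 0, fun _ => div32_self⟩,
    ⟨div32_one_three, hodd1, hodd3, 1, 3, hodd1, hodd3, heven⟩,
    _, cloneF_div32_self_div_three_times_self, 0, fun x => div32_self_div_three_times_self (x 0)⟩
end
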